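/- arXiv:2312.12448 — 2 statements merged into one kernel-verified Lean document; each statement's English description precedes it below -/
import Mathlib

section
/- Let n ≥ 1, let α, α₁, …, αₙ be real numbers with e^{i(α₁+⋯+αₙ)} = e^{iα}, and let v ∈ ℂⁿ satisfy |v_k| = 1/√n for all k. Then the matrix U = (I − (1 − e^{−iα}) v v†) · diag(e^{iα₁}, …, e^{iαₙ}) belongs to SU(n) and its diagonal product equals Πd(U) = e^{iα} (1 − (1 − e^{−iα})/n)^n. -/
/-!
Write `u = e^{-iα}` and `P = v v†`. The normalisation `|v_k|² = 1/n` makes `P` an orthogonal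
projection with diagonal entries `1/n`, so `1 - (1 - u) P = (1 - P) + u P` is unitary because
`|u| = 1`, and by the matrix determinant lemma its determinant is `u`. The diagonal factor is
unitary with determinant `e^{i∑αₖ} = e^{iα}`, which cancels `u`; and right multiplication by a
diagonal matrix scales the diagonal entries, giving the product `(1 - (1 - u)/n)ⁿ e^{iα}`.
-/

open Matrix Complex

theorem IsIdempotentElem.one_sub_add_smul_mul {S A : Type*} [CommRing S] [Ring A] [Algebra S A]
    {p : A} (hp : IsIdempotentElem p) (a b : S) :
    (1 - p + a • p) * (1 - p + b • p) = 1 - p + (a * b) • p := by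
  simp only [add_mul, mul_add, mul_smul_comm, smul_mul_assoc, smul_smul,
    hp.mul_one_sub_self, hp.one_sub_mul_self, hp.one_sub.eq, hp.eq, smul_zero, add_zero, zero_add,
    mul_comm b a]

theorem IsStarProjection.one_sub_smul_mem_unitary {S A : Type*} [CommRing S] [StarRing S]
    [Ring A] [StarRing A] [Algebra S A] [StarModule S A] {p : A} (hp : IsStarProjection p)
    {u : S} (hu : u ∈ unitary S) : 1 - (1 - u) • p ∈ unitary A := by
  have hsplit : 1 - (1 - u) • p = 1 - p + u • p := by
    rw [sub_smul, one_smul]; abel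
  have hstar : star (1 - p + u • p) = 1 - p + star u • p := by
    rw [star_add, star_smul, star_sub, star_one, hp.isSelfAdjoint.star_eq]
  rw [hsplit, Unitary.mem_iff, hstar, hp.isIdempotentElem.one_sub_add_smul_mul,
    hp.isIdempotentElem.one_sub_add_smul_mul, Unitary.star_mul_self_of_mem hu,
    Unitary.mul_star_self_of_mem hu, one_smul, sub_add_cancel]
  exact ⟨rfl, rfl⟩

namespace Matrix

variable {n α : Type*} [Fintype n]

theorem isStarProjection_vecMulVec_star [CommRing α] [StarRing α] {v : n → α}
    (hv : star v ⬝ᵥ v = 1) : IsStarProjection (vecMulVec v (star v)) where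
  isIdempotentElem := by
    rw [IsIdempotentElem, vecMulVec_mul_vecMulVec, hv, one_smul]
  isSelfAdjoint := by
    rw [IsSelfAdjoint, star_eq_conjTranspose, conjTranspose_vecMulVec, star_star]

theorem det_one_sub_smul_vecMulVec [DecidableEq n] [CommRing α] (c : α) (v w : n → α) :
    det (1 - c • vecMulVec v w) = 1 - c * (w ⬝ᵥ v) := by
  have h : c • vecMulVec v w = -(replicateCol Unit (-c • v) * replicateRow Unit w) := by
    rw [← vecMulVec_eq, smul_vecMulVec, neg_smul, neg_neg]
  rw [h, sub_neg_eq_add, det_one_add_replicateCol_mul_replicateRow, dotProduct_smul, smul_eq_mul]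
  ring

theorem diagonal_mem_unitaryGroup [DecidableEq n] [CommRing α] [StarRing α] {d : n → α}
    (hd : ∀ i, d i ∈ unitary α) : diagonal d ∈ unitaryGroup n α := by
  rw [mem_unitaryGroup_iff', star_eq_conjTranspose, diagonal_conjTranspose,
    diagonal_mul_diagonal, ← diagonal_one]
  exact congrArg diagonal (funext fun i => Unitary.star_mul_self_of_mem (hd i))

theorem prod_diag_mul_diagonal [DecidableEq n] [CommRing α] (A : Matrix n n α) (d : n → α) :
    ∏ j, (A * diagonal d) j j = (∏ j, A j j) * ∏ j, d j := by
  simp only [mul_diagonal, Finset.prod_mul_distrib]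

end Matrix

theorem Complex.exp_I_mul_ofReal_mem_unitary (θ : ℝ) : exp (I * θ) ∈ unitary ℂ := by
  simp [Unitary.mem_iff_star_mul_self, ← exp_conj, ← exp_add]

theorem star_mul_self_eq_inv_of_norm_eq {𝕜 : Type*} [RCLike 𝕜] {n : ℕ} {z : 𝕜}
    (hz : ‖z‖ = 1 / Real.sqrt n) : star z * z = (n : 𝕜)⁻¹ := by
  have hsq : ‖z‖ ^ 2 = (n : ℝ)⁻¹ := by
    rw [hz, div_pow, Real.sq_sqrt n.cast_nonneg, one_pow, one_div]
  rw [RCLike.star_def, RCLike.conj_mul, ← RCLike.ofReal_pow, hsq, RCLike.ofReal_inv,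
    RCLike.ofReal_natCast]

theorem star_dotProduct_self_eq_one_of_norm_eq {𝕜 : Type*} [RCLike 𝕜] {n : ℕ} (hn : n ≠ 0)
    {v : Fin n → 𝕜} (hv : ∀ k, ‖v k‖ = 1 / Real.sqrt n) : star v ⬝ᵥ v = 1 := by
  simp only [dotProduct, Pi.star_apply, star_mul_self_eq_inv_of_norm_eq (hv _), Finset.sum_const,
    Finset.card_univ, Fintype.card_fin, nsmul_eq_mul]
  exact mul_inv_cancel₀ (Nat.cast_ne_zero.mpr hn)

/-- If `e^{i(α₁+⋯+αₙ)} = e^{iα}` and `v ∈ ℂⁿ` has all entries of modulus `1/√n`, then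
`U = (I − (1 − e^{−iα}) v v†) · diag(e^{iα₁}, …, e^{iαₙ})` belongs to `SU(n)` and its
diagonal product equals `e^{iα} (1 − (1 − e^{−iα})/n)ⁿ`. -/
theorem mem_specialUnitaryGroup_and_diagonalProduct_of_boundary_form
    (n : ℕ) (hn : 1 ≤ n) (α : ℝ) (αs : Fin n → ℝ) (v : Fin n → ℂ)
    (hsum : Complex.exp (Complex.I * ∑ k, (αs k : ℂ)) = Complex.exp (Complex.I * α))
    (hv : ∀ k, ‖v k‖ = 1 / Real.sqrt n) :
    ((1 - (1 - Complex.exp (-(Complex.I * α))) •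
        Matrix.vecMulVec v (star v)) *
      Matrix.diagonal (fun j => Complex.exp (Complex.I * αs j))
        ∈ Matrix.specialUnitaryGroup (Fin n) ℂ) ∧
    (∏ j, (((1 - (1 - Complex.exp (-(Complex.I * α))) •
        Matrix.vecMulVec v (star v)) *
      Matrix.diagonal (fun j => Complex.exp (Complex.I * αs j))) j j)
      = Complex.exp (Complex.I * α) *
          (1 - (1 - Complex.exp (-(Complex.I * α))) / n) ^ n) := by
  set u := exp (-(I * α))
  have hu : u ∈ unitary ℂ := by simpa using exp_I_mul_ofReal_mem_unitary (-α)
  have hv_unit : star v ⬝ᵥ v = 1 := star_dotProduct_self_eq_one_of_norm_eq (by omega) hv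
  have hdiag : ∀ j, (1 - (1 - u) • vecMulVec v (star v)) j j = 1 - (1 - u) / n := fun j => by
    rw [Matrix.sub_apply, Matrix.smul_apply, vecMulVec_apply, Pi.star_apply, mul_comm (v j),
      star_mul_self_eq_inv_of_norm_eq (hv j), one_apply_eq, smul_eq_mul, div_eq_mul_inv]
  have hdet_diagonal : det (diagonal fun j => exp (I * αs j)) = exp (I * α) := by
    rw [det_diagonal, ← exp_sum, ← hsum, Finset.mul_sum]
  refine ⟨mem_specialUnitaryGroup_iff.2 ⟨?_, ?_⟩, ?_⟩
  · exact mul_mem ((isStarProjection_vecMulVec_star hv_unit).one_sub_smul_mem_unitary hu)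
      (diagonal_mem_unitaryGroup fun j => exp_I_mul_ofReal_mem_unitary (αs j))
  · rw [det_mul, det_one_sub_smul_vecMulVec, hv_unit, hdet_diagonal, mul_one, sub_sub_cancel,
      ← exp_add, neg_add_cancel, exp_zero]
  · rw [prod_diag_mul_diagonal, Finset.prod_congr rfl fun j _ => hdiag j, Finset.prod_const,
      Finset.card_univ, Fintype.card_fin, ← exp_sum, ← Finset.mul_sum, hsum, mul_comm]
end

section
/- Let n ≥ 1 and U ∈ SO(n). Then Πd(U) = −(1 − 2/n)^n if and only if U = (I − 2 u uᵀ) · diag(σ₁, …, σₙ) for some vector u ∈ ℝⁿ with |u_k| = 1/√n for all k and signs σ_j ∈ {−1, 1} with ∏_j σ_j = −1. -/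
/-!
Flipping the signs of some columns of `U` gives an orthogonal `V` with `det V = -1`; for `n ≥ 3`
the signs can be chosen so that `V j j = |U j j|`. Such a `V` has a unit vector `u` with
`V u = -u`, and then `W = V * householder u` is orthogonal with `trace W = trace V + 2`. Since
`‖W - 1‖² = 2 (n - trace W)` in the Frobenius norm, `trace V ≤ n - 2`, with equality only if
`V = householder u`. By AM–GM, `∏ |U j j| ≤ (trace V / n) ^ n ≤ (1 - 2 / n) ^ n`, so equality
forces every diagonal entry `1 - 2 u j ^ 2` of `V = householder u` to be `1 - 2 / n`.
For `n ≤ 2`, where `1 - 2 / n ≤ 0`, suitable signs are found by hand.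
-/

open Matrix

theorem Real.eq_of_prod_eq_pow_of_sum_le {ι : Type*} [Fintype ι] {x : ι → ℝ} {c : ℝ}
    (hx : ∀ j, 0 < x j) (hprod : ∏ j, x j = c ^ Fintype.card ι)
    (hsum : ∑ j, x j ≤ Fintype.card ι * c) (j : ι) : x j = c := by
  have : Nonempty ι := ⟨j⟩
  have hn : (0 : ℝ) < Fintype.card ι := Nat.cast_pos.mpr Fintype.card_pos
  set w : ι → ℝ := fun _ => (Fintype.card ι : ℝ)⁻¹
  have hw : ∑ i, w i = 1 := by simp [w]
  have hw_pos : ∀ i ∈ Finset.univ, 0 < w i := fun _ _ => inv_pos.mpr hn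
  have hc : 0 ≤ c := by
    have := Finset.sum_pos (fun i _ => hx i) Finset.univ_nonempty
    nlinarith
  have hgeom : ∏ i, x i ^ w i = c := by
    rw [Real.finsetProd_rpow _ _ fun i _ => (hx i).le, hprod,
      Real.pow_rpow_inv_natCast hc Fintype.card_ne_zero]
  have harith : ∑ i, w i * x i = (∑ i, x i) / Fintype.card ι := by
    simp [w, ← Finset.mul_sum, div_eq_inv_mul]
  have heq : ∏ i, x i ^ w i = ∑ i, w i * x i := by
    refine le_antisymm (Real.geom_mean_le_arith_mean_weighted _ w x
      (fun i hi => (hw_pos i hi).le) hw fun i _ => (hx i).le) ?_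
    rw [hgeom, harith, div_le_iff₀ hn]
    linarith
  rw [(Real.geom_mean_eq_arith_mean_weighted_iff_of_pos' _ w x hw_pos hw
    fun i _ => (hx i).le).mp heq j (Finset.mem_univ j), ← heq, hgeom]

theorem Real.abs_eq_one_div_sqrt_iff {x a : ℝ} (ha : 0 ≤ a) : |x| = 1 / √a ↔ x ^ 2 = 1 / a := by
  rw [one_div, ← Real.sqrt_inv, ← Real.sqrt_sq_eq_abs,
    Real.sqrt_inj (sq_nonneg x) (inv_nonneg.mpr ha), one_div]

theorem exists_signs_mul_eq_abs {ι : Type*} (x : ι → ℝ) :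
    ∃ ε : ι → ℝ, (∀ j, ε j = 1 ∨ ε j = -1) ∧ ∀ j, x j * ε j = |x j| := by
  refine ⟨fun j => if 0 ≤ x j then 1 else -1, fun j => ?_, fun j => ?_⟩
  · dsimp only
    split_ifs <;> simp
  · dsimp only
    split_ifs with hj
    · rw [mul_one, abs_of_nonneg hj]
    · rw [mul_neg_one, abs_of_neg (not_le.mp hj)]

namespace Matrix

variable {ι : Type*} [DecidableEq ι]

def householder (u : ι → ℝ) : Matrix ι ι ℝ := 1 - (2 : ℝ) • vecMulVec u u

theorem householder_apply_self (u : ι → ℝ) (j : ι) : householder u j j = 1 - 2 * u j ^ 2 := by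
  simp [householder, vecMulVec_apply, sq]

theorem transpose_householder (u : ι → ℝ) : (householder u)ᵀ = householder u := by
  simp [householder, transpose_vecMulVec]

variable [Fintype ι]

theorem trace_mul_householder (W : Matrix ι ι ℝ) (u : ι → ℝ) :
    (W * householder u).trace = W.trace - 2 * (u ⬝ᵥ (W *ᵥ u)) := by
  rw [householder, mul_sub, mul_one, Matrix.mul_smul, trace_sub, trace_smul, mul_vecMulVec,
    trace_vecMulVec, smul_eq_mul, dotProduct_comm]

theorem householder_mul_self {u : ι → ℝ} (hu : u ⬝ᵥ u = 1) :
    householder u * householder u = 1 := by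
  rw [householder, sub_mul, mul_sub, mul_sub, one_mul, mul_one, one_mul, smul_mul_smul,
    vecMulVec_mul_vecMulVec, hu, one_smul]
  module

theorem householder_mem_orthogonalGroup {u : ι → ℝ} (hu : u ⬝ᵥ u = 1) :
    householder u ∈ orthogonalGroup ι ℝ := by
  rw [mem_orthogonalGroup_iff, transpose_householder, householder_mul_self hu]

theorem diagonal_mem_orthogonalGroup {ε : ι → ℝ} (hε : ∀ j, ε j = 1 ∨ ε j = -1) :
    diagonal ε ∈ orthogonalGroup ι ℝ := by
  rw [mem_orthogonalGroup_iff, diagonal_transpose, diagonal_mul_diagonal, ← diagonal_one]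
  congr 1
  funext j
  rcases hε j with h | h <;> simp [h]

variable {V W : Matrix ι ι ℝ}

theorem trace_transpose_sub_one_mul_sub_one (hW : W ∈ orthogonalGroup ι ℝ) :
    ((W - 1)ᵀ * (W - 1)).trace = 2 * (Fintype.card ι - W.trace) := by
  rw [transpose_sub, transpose_one, sub_mul, mul_sub, mul_sub,
    (mem_orthogonalGroup_iff' ι ℝ).mp hW, trace_sub, trace_sub, trace_sub, mul_one, one_mul,
    one_mul, trace_transpose, trace_one]
  ring

theorem trace_le_card_of_mem_orthogonalGroup (hW : W ∈ orthogonalGroup ι ℝ) :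
    W.trace ≤ Fintype.card ι := by
  have := (posSemidef_conjTranspose_mul_self (W - 1)).trace_nonneg
  rw [conjTranspose_eq_transpose_of_trivial, trace_transpose_sub_one_mul_sub_one hW] at this
  linarith

theorem eq_one_of_trace_eq_card (hW : W ∈ orthogonalGroup ι ℝ)
    (htr : W.trace = Fintype.card ι) : W = 1 := by
  have := (trace_conjTranspose_mul_self_eq_zero_iff (A := W - 1)).mp
  rw [conjTranspose_eq_transpose_of_trivial, trace_transpose_sub_one_mul_sub_one hW, htr] at this
  exact sub_eq_zero.mp (this (by ring))

theorem exists_dotProduct_self_eq_one_mulVec_eq_neg (hV : V ∈ orthogonalGroup ι ℝ)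
    (hdet : V.det = -1) : ∃ u : ι → ℝ, u ⬝ᵥ u = 1 ∧ V *ᵥ u = -u := by
  have hsingular : (1 + V).det = 0 := by
    have hfactor : 1 + V = V * (1 + V)ᵀ := by
      rw [transpose_add, transpose_one, mul_add, mul_one, (mem_orthogonalGroup_iff ι ℝ).mp hV,
        add_comm]
    have : (1 + V).det = -(1 + V).det := by
      conv_lhs => rw [hfactor, det_mul, det_transpose, hdet, neg_one_mul]
    linarith
  obtain ⟨x, hx, hVx⟩ := exists_mulVec_eq_zero_iff.mpr hsingular
  rw [add_mulVec, one_mulVec] at hVx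
  have hxx : 0 < x ⬝ᵥ x :=
    (Finset.sum_nonneg fun k _ => mul_self_nonneg (x k)).lt_of_ne'
      (dotProduct_self_eq_zero.not.mpr hx)
  refine ⟨(√(x ⬝ᵥ x))⁻¹ • x, ?_, ?_⟩
  · rw [dotProduct_smul, smul_dotProduct, smul_smul, smul_eq_mul, ← mul_inv,
      Real.mul_self_sqrt hxx.le, inv_mul_cancel₀ hxx.ne']
  · rw [mulVec_smul, eq_neg_of_add_eq_zero_right hVx, smul_neg]

theorem trace_mul_householder_of_mulVec_eq_neg {u : ι → ℝ} (hu : u ⬝ᵥ u = 1)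
    (hVu : V *ᵥ u = -u) : (V * householder u).trace = V.trace + 2 := by
  rw [trace_mul_householder, hVu, dotProduct_neg, hu]
  ring

theorem trace_le_card_sub_two_of_det_eq_neg_one (hV : V ∈ orthogonalGroup ι ℝ)
    (hdet : V.det = -1) : V.trace ≤ Fintype.card ι - 2 := by
  obtain ⟨u, hu, hVu⟩ := exists_dotProduct_self_eq_one_mulVec_eq_neg hV hdet
  have := trace_le_card_of_mem_orthogonalGroup (mul_mem hV (householder_mem_orthogonalGroup hu))
  rw [trace_mul_householder_of_mulVec_eq_neg hu hVu] at this
  linarith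

theorem exists_eq_householder_of_trace_eq (hV : V ∈ orthogonalGroup ι ℝ) (hdet : V.det = -1)
    (htr : V.trace = Fintype.card ι - 2) : ∃ u, V = householder u := by
  obtain ⟨u, hu, hVu⟩ := exists_dotProduct_self_eq_one_mulVec_eq_neg hV hdet
  have hW : V * householder u = 1 :=
    eq_one_of_trace_eq_card (mul_mem hV (householder_mem_orthogonalGroup hu))
      (by rw [trace_mul_householder_of_mulVec_eq_neg hu hVu, htr]; ring)
  refine ⟨u, ?_⟩
  calc V = V * householder u * householder u := by rw [mul_assoc, householder_mul_self hu, mul_one]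
    _ = householder u := by rw [hW, one_mul]

theorem diag_eq_of_prod_diag_eq (hV : V ∈ orthogonalGroup ι ℝ) (hdet : V.det = -1)
    (hpos : ∀ j, 0 < V j j)
    (hprod : ∏ j, V j j = (1 - 2 / (Fintype.card ι : ℝ)) ^ Fintype.card ι) (j : ι) :
    V j j = 1 - 2 / (Fintype.card ι : ℝ) := by
  have : Nonempty ι := ⟨j⟩
  have hn : (Fintype.card ι : ℝ) ≠ 0 := Nat.cast_ne_zero.mpr Fintype.card_ne_zero
  refine Real.eq_of_prod_eq_pow_of_sum_le hpos hprod ?_ j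
  rw [mul_sub, mul_div_cancel₀ _ hn, mul_one]
  exact trace_le_card_sub_two_of_det_eq_neg_one hV hdet

theorem exists_signs_mul_diag_eq_of_two_lt {U : Matrix ι ι ℝ} (hι : 2 < Fintype.card ι)
    (hU : U ∈ specialOrthogonalGroup ι ℝ)
    (h : ∏ j, U j j = -(1 - 2 / (Fintype.card ι : ℝ)) ^ Fintype.card ι) :
    ∃ ε : ι → ℝ, (∀ j, ε j = 1 ∨ ε j = -1) ∧ ∏ j, ε j = -1 ∧
      ∀ j, U j j * ε j = 1 - 2 / (Fintype.card ι : ℝ) := by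
  set c : ℝ := 1 - 2 / (Fintype.card ι : ℝ)
  have hc : 0 < c := by
    have : (2 : ℝ) < Fintype.card ι := by exact_mod_cast hι
    rw [sub_pos, div_lt_one (by linarith)]
    exact this
  have hcn : c ^ Fintype.card ι ≠ 0 := (pow_pos hc _).ne'
  have hU_ne : ∀ j, U j j ≠ 0 := by
    have : ∏ j, U j j ≠ 0 := by rw [h]; exact neg_ne_zero.mpr hcn
    exact fun j => Finset.prod_ne_zero_iff.mp this j (Finset.mem_univ j)
  obtain ⟨ε, hε, habs⟩ := exists_signs_mul_eq_abs fun j => U j j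
  have hprod_abs : ∏ j, |U j j| = c ^ Fintype.card ι := by
    rw [← Finset.abs_prod, h, abs_neg, abs_of_pos (pow_pos hc _)]
  have hεprod : ∏ j, ε j = -1 := by
    have : (∏ j, U j j) * ∏ j, ε j = ∏ j, |U j j| := by
      rw [← Finset.prod_mul_distrib]
      exact Finset.prod_congr rfl fun j _ => habs j
    rw [h, hprod_abs] at this
    exact mul_right_cancel₀ hcn (by linear_combination -this)
  obtain ⟨hUo, hUdet⟩ := mem_specialOrthogonalGroup_iff.mp hU
  set V := U * diagonal ε with hVdef
  have hV : V ∈ orthogonalGroup ι ℝ := mul_mem hUo (diagonal_mem_orthogonalGroup hε)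
  have hdet : V.det = -1 := by rw [det_mul, det_diagonal, hUdet, hεprod, one_mul]
  have hVjj : ∀ j, V j j = |U j j| := fun j => by rw [hVdef, mul_diagonal, habs]
  have hpos : ∀ j, 0 < V j j := fun j => by
    rw [hVjj]
    exact abs_pos.mpr (hU_ne j)
  refine ⟨ε, hε, hεprod, fun j => ?_⟩
  rw [habs, ← hVjj]
  exact diag_eq_of_prod_diag_eq hV hdet hpos (by simp only [hVjj]; exact hprod_abs) j

theorem exists_eq_householder_mul_diagonal {U : Matrix ι ι ℝ} {ε : ι → ℝ}
    (hU : U ∈ specialOrthogonalGroup ι ℝ) (hε : ∀ j, ε j = 1 ∨ ε j = -1) (hεprod : ∏ j, ε j = -1)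
    (hdiag : ∀ j, U j j * ε j = 1 - 2 / (Fintype.card ι : ℝ)) :
    ∃ u : ι → ℝ, (∀ j, u j ^ 2 = 1 / (Fintype.card ι : ℝ)) ∧ U = householder u * diagonal ε := by
  have hn : (Fintype.card ι : ℝ) ≠ 0 := by
    intro h0
    have : IsEmpty ι := Fintype.card_eq_zero_iff.mp (by exact_mod_cast h0)
    norm_num at hεprod
  obtain ⟨hUo, hUdet⟩ := mem_specialOrthogonalGroup_iff.mp hU
  set V := U * diagonal ε with hVdef
  have hV : V ∈ orthogonalGroup ι ℝ := mul_mem hUo (diagonal_mem_orthogonalGroup hε)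
  have hdet : V.det = -1 := by rw [det_mul, det_diagonal, hUdet, hεprod, one_mul]
  have hVjj : ∀ j, V j j = 1 - 2 / (Fintype.card ι : ℝ) := fun j => by
    rw [hVdef, mul_diagonal, hdiag]
  have htr : V.trace = Fintype.card ι - 2 := by
    simp only [trace, diag, hVjj, Finset.sum_const, Finset.card_univ, nsmul_eq_mul]
    field_simp
  obtain ⟨u, hVu⟩ := exists_eq_householder_of_trace_eq hV hdet htr
  refine ⟨u, fun j => ?_, ?_⟩
  · have := hVjj j
    rw [hVu, householder_apply_self] at this
    linear_combination this / -2
  · have hεε : diagonal ε * diagonal ε = 1 := by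
      simpa using (mem_orthogonalGroup_iff ι ℝ).mp (diagonal_mem_orthogonalGroup hε)
    rw [← hVu, mul_assoc, hεε, mul_one]

end Matrix

theorem exists_signs_mul_diag_eq {n : ℕ} {U : Matrix (Fin n) (Fin n) ℝ}
    (hU : U ∈ specialOrthogonalGroup (Fin n) ℝ) (h : ∏ j, U j j = -(1 - 2 / (n : ℝ)) ^ n) :
    ∃ ε : Fin n → ℝ, (∀ j, ε j = 1 ∨ ε j = -1) ∧ ∏ j, ε j = -1 ∧
      ∀ j, U j j * ε j = 1 - 2 / (n : ℝ) := by
  obtain _ | _ | _ | n := n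
  · norm_num at h
  · have hU00 : U 0 0 = 1 := (det_fin_one U).symm.trans (mem_specialOrthogonalGroup_iff.mp hU).2
    refine ⟨fun _ => -1, fun _ => Or.inr rfl, by simp, fun j => ?_⟩
    fin_cases j
    norm_num [hU00]
  · have hU11 : U 1 1 = U 0 0 := (mem_specialOrthogonalGroup_fin_two_iff.mp hU).1.symm
    have hU00 : U 0 0 = 0 := by
      rw [Fin.prod_univ_two, hU11] at h
      norm_num at h
      exact h
    refine ⟨![1, -1], fun j => ?_, by simp, fun j => ?_⟩
    · fin_cases j <;> simp
    · fin_cases j <;> simp [hU00, hU11]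
  · simpa using exists_signs_mul_diag_eq_of_two_lt (by simp) hU (by simpa using h)

theorem diagonalProduct_specialOrthogonalGroup_eq_min_iff_general (n : ℕ)
    (U : Matrix (Fin n) (Fin n) ℝ)
    (hU : U ∈ Matrix.specialOrthogonalGroup (Fin n) ℝ) :
    (∏ j, U j j) = -(1 - 2 / (n : ℝ)) ^ n ↔
      ∃ (u : Fin n → ℝ) (σ : Fin n → ℝ),
        (∀ k, |u k| = 1 / Real.sqrt n) ∧
        (∀ j, σ j = 1 ∨ σ j = -1) ∧ (∏ j, σ j) = -1 ∧
        U = (1 - (2 : ℝ) • Matrix.vecMulVec u u) * Matrix.diagonal σ := by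
  constructor
  · intro h
    obtain ⟨ε, hε, hεprod, hdiag⟩ := exists_signs_mul_diag_eq hU h
    obtain ⟨u, hu, rfl⟩ :=
      exists_eq_householder_mul_diagonal hU hε hεprod (by simpa using hdiag)
    refine ⟨u, ε, fun k => (Real.abs_eq_one_div_sqrt_iff n.cast_nonneg).mpr ?_, hε, hεprod, rfl⟩
    simpa using hu k
  · rintro ⟨u, σ, hu, -, hσ, rfl⟩
    change ∏ j, (householder u * diagonal σ) j j = _
    simp only [mul_diagonal, householder_apply_self,
      (Real.abs_eq_one_div_sqrt_iff n.cast_nonneg).mp (hu _), Finset.prod_mul_distrib, hσ,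
      Finset.prod_const, Finset.card_univ, Fintype.card_fin]
    ring

/-- For `U ∈ SO(n)`, the diagonal product equals `−(1 − 2/n)ⁿ` iff
`U = (I − 2uuᵀ) · diag(σ₁, …, σₙ)` for some `u ∈ ℝⁿ` with `|u_k| = 1/√n` for all `k`
and signs `σⱼ ∈ {−1, 1}` with `∏ⱼ σⱼ = −1`. -/
theorem diagonalProduct_specialOrthogonalGroup_eq_min_iff (n : ℕ) (hn : 1 ≤ n)
    (U : Matrix (Fin n) (Fin n) ℝ)
    (hU : U ∈ Matrix.specialOrthogonalGroup (Fin n) ℝ) :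
    (∏ j, U j j) = -(1 - 2 / (n : ℝ)) ^ n ↔
      ∃ (u : Fin n → ℝ) (σ : Fin n → ℝ),
        (∀ k, |u k| = 1 / Real.sqrt n) ∧
        (∀ j, σ j = 1 ∨ σ j = -1) ∧ (∏ j, σ j) = -1 ∧
        U = (1 - (2 : ℝ) • Matrix.vecMulVec u u) * Matrix.diagonal σ :=
  diagonalProduct_specialOrthogonalGroup_eq_min_iff_general n U hU
end
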